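/- arXiv:2412.19203 — 2 statements merged into one kernel-verified Lean document; each statement's English description precedes it below -/
import Mathlib

section
/- In the girth-4 setting: for each i ∈ {1,2,3,4} and each u ∈ T_{x_i}, the number of neighbors of u in T_{x_{i+2}} satisfies |T_{x_{i+2}}| − 1 ≤ |N(u) ∩ T_{x_{i+2}}| ≤ 2, and for each j ∈ {i−1, i+1} (indices modulo 4) the number of neighbors of u in T_{x_j} satisfies |T_{x_j}| − 2 ≤ |N(u) ∩ T_{x_j}| ≤ 1. -/
/-- The adjacency matrix of a simple graph over `ℝ` is Hermitian. -/
lemma adjMatrix_isHermitian {V : Type*} [Fintype V] (G : SimpleGraph V)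
    [DecidableRel G.Adj] : ((G.adjMatrix ℝ)).IsHermitian := by
  rw [Matrix.IsHermitian, Matrix.conjTranspose_eq_transpose_of_trivial]
  exact G.isSymm_adjMatrix

/-- The number of eigenvalues (counted with multiplicity) of the real adjacency matrix of `G`
satisfying the predicate `p`. -/
noncomputable def eigCount {V : Type*} [Fintype V] [DecidableEq V]
    (G : SimpleGraph V) (p : ℝ → Prop) : ℕ := by
  classical
  exact (Finset.univ.filter fun i =>
    p ((adjMatrix_isHermitian G).eigenvalues i)).card
/-- `HasMinor G H` : `H` is a minor of `G`, witnessed by a family of pairwise disjoint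
nonempty branch sets, each inducing a connected subgraph of `G`, such that every edge of `H`
is realized by an edge of `G` between the corresponding branch sets. -/
def HasMinor {V : Type*} {W : Type*} (G : SimpleGraph V) (H : SimpleGraph W) : Prop :=
  ∃ B : W → Set V,
    (∀ w, (B w).Nonempty) ∧
    (Pairwise fun w₁ w₂ => Disjoint (B w₁) (B w₂)) ∧
    (∀ w, (G.induce (B w)).Connected) ∧
    (∀ ⦃w₁ w₂⦄, H.Adj w₁ w₂ → ∃ a ∈ B w₁, ∃ b ∈ B w₂, G.Adj a b)

/-- `G` is planar in the sense of Wagner: it has neither `K₅` nor `K_{3,3}` as a minor. -/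
def WagnerPlanar {V : Type*} (G : SimpleGraph V) : Prop :=
  ¬ HasMinor G (⊤ : SimpleGraph (Fin 5)) ∧
    ¬ HasMinor G (completeBipartiteGraph (Fin 3) (Fin 3))
/-- For a 4-cycle `x₀x₁x₂x₃x₀` in `G` and `S ⊆ Fin 4`, the set
`T_S = {v ∉ {x₀,x₁,x₂,x₃} : N(v) ∩ {x₀,x₁,x₂,x₃} = {x i : i ∈ S}}`. -/
def TS {V : Type*} (G : SimpleGraph V) (x : Fin 4 → V) (S : Set (Fin 4)) : Set V :=
  {v | v ∉ Set.range x ∧ ∀ i, G.Adj v (x i) ↔ i ∈ S}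

/-- The set `T_j` of vertices outside the 4-cycle having exactly `j` neighbors among
`{x₀,x₁,x₂,x₃}`. -/
def Tdeg {V : Type*} (G : SimpleGraph V) (x : Fin 4 → V) (j : ℕ) : Set V :=
  {v | v ∉ Set.range x ∧ {i : Fin 4 | G.Adj v (x i)}.ncard = j}
open Matrix in
lemma two_big_eigs {V : Type*} [Fintype V] [DecidableEq V] (G : SimpleGraph V)
    {adj : DecidableRel G.Adj}
    {dp : DecidablePred fun i : V => 1 < (adjMatrix_isHermitian G).eigenvalues i}
    (hl : (Finset.univ.filter fun i : V =>
        1 < (adjMatrix_isHermitian G).eigenvalues i).card ≤ 1)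
    (v w : V → ℝ)
    (ha : 0 < v ⬝ᵥ (G.adjMatrix ℝ *ᵥ v) - v ⬝ᵥ v)
    (hc : 0 < w ⬝ᵥ (G.adjMatrix ℝ *ᵥ w) - w ⬝ᵥ w)
    (hb : (v ⬝ᵥ (G.adjMatrix ℝ *ᵥ w) - v ⬝ᵥ w) ^ 2 <
      (v ⬝ᵥ (G.adjMatrix ℝ *ᵥ v) - v ⬝ᵥ v) * (w ⬝ᵥ (G.adjMatrix ℝ *ᵥ w) - w ⬝ᵥ w)) :
    False := by
  rcases isEmpty_or_nonempty V with hV | hV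
  · simp [dotProduct] at ha
  have hA : (G.adjMatrix ℝ).IsHermitian := adjMatrix_isHermitian G
  obtain ⟨i0, hi0⟩ : ∃ i0 : V, ∀ i, 1 < (adjMatrix_isHermitian G).eigenvalues i → i = i0 := by
    have hsub := Finset.card_le_one.mp hl
    by_cases hne : ∃ i, 1 < (adjMatrix_isHermitian G).eigenvalues i
    · obtain ⟨i0, hi0⟩ := hne
      exact ⟨i0, fun i hi => hsub i
        (Finset.mem_filter.mpr ⟨Finset.mem_univ _, hi⟩) i0
        (Finset.mem_filter.mpr ⟨Finset.mem_univ _, hi0⟩)⟩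
    · exact ⟨Classical.arbitrary V, fun i hi => absurd ⟨i, hi⟩ hne⟩
  set A : Matrix V V ℝ := G.adjMatrix ℝ with hAdef
  set μ : V → ℝ := hA.eigenvalues with hμ
  set U : Matrix V V ℝ := (Matrix.IsHermitian.eigenvectorUnitary hA : Matrix V V ℝ) with hUdef
  have hUU : U * star U = 1 :=
    Matrix.mem_unitaryGroup_iff.mp (Matrix.IsHermitian.eigenvectorUnitary hA).2
  have hspec : A = U * Matrix.diagonal μ * star U := by
    have h := hA.spectral_theorem
    rwa [show (RCLike.ofReal ∘ hA.eigenvalues : V → ℝ) = μ from by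
      ext i; simp [hμ]] at h
  set cm : (V → ℝ) → (V → ℝ) := fun x => star U *ᵥ x with hcm
  have hdot : ∀ x y : V → ℝ, x ⬝ᵥ (U *ᵥ y) = cm x ⬝ᵥ y := by
    intro x y
    rw [Matrix.dotProduct_mulVec]
    congr 1
    show x ᵥ* U = star U *ᵥ x
    rw [Matrix.star_eq_conjTranspose, Matrix.conjTranspose_eq_transpose_of_trivial,
      Matrix.mulVec_transpose]
  have hAxy : ∀ x y : V → ℝ, x ⬝ᵥ (A *ᵥ y) = ∑ i, μ i * (cm x i * cm y i) := by
    intro x y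
    rw [hspec, ← Matrix.mulVec_mulVec, ← Matrix.mulVec_mulVec, hdot]
    simp only [dotProduct, Matrix.mulVec_diagonal]
    exact Finset.sum_congr rfl fun i _ => by ring
  have hxy : ∀ x y : V → ℝ, x ⬝ᵥ y = ∑ i, cm x i * cm y i := by
    intro x y
    have h1 : x ⬝ᵥ y = x ⬝ᵥ ((U * star U) *ᵥ y) := by rw [hUU, Matrix.one_mulVec]
    rw [h1, ← Matrix.mulVec_mulVec, hdot]
    rfl
  set Q : (V → ℝ) → (V → ℝ) → ℝ := fun x y => x ⬝ᵥ (A *ᵥ y) - x ⬝ᵥ y with hQdef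
  have hQ : ∀ x y : V → ℝ, Q x y = ∑ i, (μ i - 1) * (cm x i * cm y i) := by
    intro x y
    rw [hQdef]
    simp only
    rw [hAxy, hxy, ← Finset.sum_sub_distrib]
    exact Finset.sum_congr rfl fun i _ => by ring
  -- unique possibly-big eigenvalue index
  have key : ∀ y : V → ℝ, cm y i0 = 0 → Q y y ≤ 0 := by
    intro y hy0
    rw [hQ]
    apply Finset.sum_nonpos
    intro i _
    by_cases hii : i = i0
    · subst hii; rw [hy0]; simp
    · have hle : μ i ≤ 1 := by
        by_contra hgt
        exact hii (hi0 i (lt_of_not_ge hgt))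
      have := mul_self_nonneg (cm y i)
      nlinarith
  have haQ : 0 < Q v v := ha
  have hcQ : 0 < Q w w := hc
  have hbQ : (Q v w) ^ 2 < Q v v * Q w w := hb
  set α : ℝ := cm w i0 with hα
  set β : ℝ := cm v i0 with hβ
  by_cases hb0 : β = 0
  · exact absurd (key v hb0) (not_le.mpr haQ)
  · set y : V → ℝ := α • v - β • w with hy
    have hcmy : ∀ i, cm y i = α * cm v i - β * cm w i := by
      intro i
      rw [hy, hcm]
      simp [Matrix.mulVec_sub, Matrix.mulVec_smul]
    have hy0 : cm y i0 = 0 := by rw [hcmy]; rw [← hα, ← hβ]; ring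
    have hexp : Q y y = α ^ 2 * Q v v - 2 * α * β * Q v w + β ^ 2 * Q w w := by
      calc Q y y = ∑ i, (α ^ 2 * ((μ i - 1) * (cm v i * cm v i))
            - 2 * α * β * ((μ i - 1) * (cm v i * cm w i))
            + β ^ 2 * ((μ i - 1) * (cm w i * cm w i))) := by
              rw [hQ]
              exact Finset.sum_congr rfl fun i _ => by rw [hcmy i]; ring
        _ = α ^ 2 * Q v v - 2 * α * β * Q v w + β ^ 2 * Q w w := by
              rw [hQ v v, hQ v w, hQ w w, Finset.mul_sum, Finset.mul_sum, Finset.mul_sum,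
                Finset.sum_add_distrib, Finset.sum_sub_distrib]
    have hpos : 0 < Q y y := by
      rw [hexp]
      have hβ2 : 0 < β ^ 2 := by positivity
      nlinarith [sq_nonneg (α * Q v v - β * Q v w), mul_pos hβ2 (sub_pos.mpr hbQ)]
    exact absurd (key y hy0) (not_le.mpr hpos)

open Matrix in
lemma embed_dot_aux {V : Type*} [Fintype V] [DecidableEq V] {m : ℕ}
    (f : Fin m → V) (c : Fin m → ℝ) (y : V → ℝ) :
    (∑ p, Pi.single (f p) (c p)) ⬝ᵥ y = ∑ p, c p * y (f p) := by
  simp only [dotProduct, Finset.sum_apply, Finset.sum_mul]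
  rw [Finset.sum_comm]
  refine Finset.sum_congr rfl fun p _ => ?_
  simp [Pi.single_apply]

open Matrix in
lemma embed_dot {V : Type*} [Fintype V] [DecidableEq V] {m : ℕ}
    (f : Fin m → V) (hf : Function.Injective f) (c d : Fin m → ℝ) :
    (∑ p, Pi.single (f p) (c p)) ⬝ᵥ (∑ p, Pi.single (f p) (d p)) = ∑ p, c p * d p := by
  rw [embed_dot_aux]
  refine Finset.sum_congr rfl fun p _ => ?_
  congr 1
  rw [Finset.sum_apply]
  simp [Pi.single_apply, hf.eq_iff]

open Matrix in
lemma embed_mulVec_dot {V : Type*} [Fintype V] [DecidableEq V] {m : ℕ}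
    (f : Fin m → V) (c d : Fin m → ℝ) (M : Matrix V V ℝ) :
    (∑ p, Pi.single (f p) (c p)) ⬝ᵥ (M *ᵥ ∑ p, Pi.single (f p) (d p))
      = ∑ p, ∑ q, c p * (M (f p) (f q) * d q) := by
  rw [embed_dot_aux]
  refine Finset.sum_congr rfl fun p _ => ?_
  have h1 : (M *ᵥ ∑ p, Pi.single (f p) (d p)) (f p) = ∑ q, M (f p) (f q) * d q := by
    simp only [Matrix.mulVec, dotProduct, Finset.sum_apply, Pi.single_apply,
      Finset.mul_sum, mul_ite, mul_zero]
    rw [Finset.sum_comm]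
    simp
  rw [h1, Finset.mul_sum]

open Matrix in
lemma config_contra {V : Type*} [Fintype V] [DecidableEq V] (G : SimpleGraph V)
    {adj : DecidableRel G.Adj}
    {dp : DecidablePred fun i : V => 1 < (adjMatrix_isHermitian G).eigenvalues i}
    (hl : (Finset.univ.filter fun i : V =>
        1 < (adjMatrix_isHermitian G).eigenvalues i).card ≤ 1)
    {m : ℕ} (f : Fin m → V) (hf : Function.Injective f) (P : Fin m → Fin m → Bool)
    (hP : ∀ p q, G.Adj (f p) (f q) ↔ P p q = true)
    (c d : Fin m → ℝ)
    (h1 : 0 < (∑ p, ∑ q, if P p q then c p * c q else 0) - ∑ p, c p * c p)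
    (h2 : 0 < (∑ p, ∑ q, if P p q then d p * d q else 0) - ∑ p, d p * d p)
    (h3 : ((∑ p, ∑ q, if P p q then c p * d q else 0) - ∑ p, c p * d p) ^ 2 <
      ((∑ p, ∑ q, if P p q then c p * c q else 0) - ∑ p, c p * c p) *
      ((∑ p, ∑ q, if P p q then d p * d q else 0) - ∑ p, d p * d p)) : False := by
  have key : ∀ a b : Fin m → ℝ,
      (∑ p, Pi.single (f p) (a p)) ⬝ᵥ (G.adjMatrix ℝ *ᵥ ∑ p, Pi.single (f p) (b p))
        = ∑ p, ∑ q, (if P p q then a p * b q else 0) := by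
    intro a b
    rw [embed_mulVec_dot]
    refine Finset.sum_congr rfl fun p _ => Finset.sum_congr rfl fun q _ => ?_
    by_cases h : P p q = true
    · rw [if_pos h, SimpleGraph.adjMatrix_apply, if_pos ((hP p q).mpr h)]; ring
    · rw [if_neg (by simpa using h), SimpleGraph.adjMatrix_apply,
        if_neg (fun ha => h ((hP p q).mp ha))]; ring
  refine two_big_eigs G hl (∑ p, Pi.single (f p) (c p)) (∑ p, Pi.single (f p) (d p)) ?_ ?_ ?_
  · rw [key, embed_dot f hf]; exact h1
  · rw [key, embed_dot f hf]; exact h2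
  · rw [key, key, key, embed_dot f hf, embed_dot f hf, embed_dot f hf]; exact h3

open Matrix in
lemma config_A_up {V : Type*} [Fintype V] [DecidableEq V] (G : SimpleGraph V)
    {adj : DecidableRel G.Adj}
    {dp : DecidablePred fun i : V => 1 < (adjMatrix_isHermitian G).eigenvalues i}
    (hl : (Finset.univ.filter fun i : V =>
        1 < (adjMatrix_isHermitian G).eigenvalues i).card ≤ 1)
    (y : Fin 4 → V) (hyinj : Function.Injective y)
    (hyadj : ∀ a b : Fin 4, G.Adj (y a) (y b) ↔ (b = a + 1 ∨ b = a - 1))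
    (u w1 w2 w3 : V)
    (hu_ne : ∀ k, u ≠ y k) (hu : ∀ k, G.Adj u (y k) ↔ k = 0)
    (hw1_ne : ∀ k, w1 ≠ y k) (hw1a : ∀ k, G.Adj w1 (y k) ↔ k = 2)
    (hw2_ne : ∀ k, w2 ≠ y k) (hw2a : ∀ k, G.Adj w2 (y k) ↔ k = 2)
    (hw3_ne : ∀ k, w3 ≠ y k) (hw3a : ∀ k, G.Adj w3 (y k) ↔ k = 2)
    (hnew1w2 : w1 ≠ w2) (hnadjw1w2 : ¬ G.Adj w1 w2)
    (hnew1w3 : w1 ≠ w3) (hnadjw1w3 : ¬ G.Adj w1 w3)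
    (hnew2w3 : w2 ≠ w3) (hnadjw2w3 : ¬ G.Adj w2 w3)
    (huww1 : G.Adj u w1)
    (huww2 : G.Adj u w2)
    (huww3 : G.Adj u w3)
    : False := by
  have a01 : G.Adj (y 0) (y 1) := (hyadj 0 1).mpr (by decide)
  have a12 : G.Adj (y 1) (y 2) := (hyadj 1 2).mpr (by decide)
  have a23 : G.Adj (y 2) (y 3) := (hyadj 2 3).mpr (by decide)
  have a30 : G.Adj (y 3) (y 0) := (hyadj 3 0).mpr (by decide)
  have a10 := a01.symm
  have a21 := a12.symm
  have a32 := a23.symm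
  have a03 := a30.symm
  have n02 : ¬ G.Adj (y 0) (y 2) := fun h => absurd ((hyadj 0 2).mp h) (by decide)
  have n13 : ¬ G.Adj (y 1) (y 3) := fun h => absurd ((hyadj 1 3).mp h) (by decide)
  have n20 : ¬ G.Adj (y 2) (y 0) := fun h => n02 h.symm
  have n31 : ¬ G.Adj (y 3) (y 1) := fun h => n13 h.symm
  have au0 : G.Adj u (y 0) := (hu 0).mpr rfl
  have a0u := au0.symm
  have nu1 : ¬ G.Adj u (y 1) := fun h => absurd ((hu 1).mp h) (by decide)
  have nu2 : ¬ G.Adj u (y 2) := fun h => absurd ((hu 2).mp h) (by decide)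
  have nu3 : ¬ G.Adj u (y 3) := fun h => absurd ((hu 3).mp h) (by decide)
  have n1u : ¬ G.Adj (y 1) u := fun h => nu1 h.symm
  have n2u : ¬ G.Adj (y 2) u := fun h => nu2 h.symm
  have n3u : ¬ G.Adj (y 3) u := fun h => nu3 h.symm
  have ne01 : y 0 ≠ y 1 := fun h => absurd (hyinj h) (by decide)
  have ne02 : y 0 ≠ y 2 := fun h => absurd (hyinj h) (by decide)
  have ne03 : y 0 ≠ y 3 := fun h => absurd (hyinj h) (by decide)
  have ne12 : y 1 ≠ y 2 := fun h => absurd (hyinj h) (by decide)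
  have ne13 : y 1 ≠ y 3 := fun h => absurd (hyinj h) (by decide)
  have ne23 : y 2 ≠ y 3 := fun h => absurd (hyinj h) (by decide)
  have neu0 := hu_ne 0
  have neu1 := hu_ne 1
  have neu2 := hu_ne 2
  have neu3 := hu_ne 3
  have aw1A : G.Adj w1 (y 2) := (hw1a 2).mpr rfl
  have aAw1 := aw1A.symm
  have nw10 : ¬ G.Adj w1 (y 0) := fun h => absurd ((hw1a 0).mp h) (by decide)
  have n0w1 : ¬ G.Adj (y 0) w1 := fun h => nw10 h.symm
  have nw11 : ¬ G.Adj w1 (y 1) := fun h => absurd ((hw1a 1).mp h) (by decide)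
  have n1w1 : ¬ G.Adj (y 1) w1 := fun h => nw11 h.symm
  have nw13 : ¬ G.Adj w1 (y 3) := fun h => absurd ((hw1a 3).mp h) (by decide)
  have n3w1 : ¬ G.Adj (y 3) w1 := fun h => nw13 h.symm
  have new10 := hw1_ne 0
  have ne0w1 := (hw1_ne 0).symm
  have new11 := hw1_ne 1
  have ne1w1 := (hw1_ne 1).symm
  have new12 := hw1_ne 2
  have ne2w1 := (hw1_ne 2).symm
  have new13 := hw1_ne 3
  have ne3w1 := (hw1_ne 3).symm
  have aw1u := huww1.symm
  have neuw1 : u ≠ w1 := huww1.ne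
  have new1u : w1 ≠ u := huww1.ne'
  have aw2A : G.Adj w2 (y 2) := (hw2a 2).mpr rfl
  have aAw2 := aw2A.symm
  have nw20 : ¬ G.Adj w2 (y 0) := fun h => absurd ((hw2a 0).mp h) (by decide)
  have n0w2 : ¬ G.Adj (y 0) w2 := fun h => nw20 h.symm
  have nw21 : ¬ G.Adj w2 (y 1) := fun h => absurd ((hw2a 1).mp h) (by decide)
  have n1w2 : ¬ G.Adj (y 1) w2 := fun h => nw21 h.symm
  have nw23 : ¬ G.Adj w2 (y 3) := fun h => absurd ((hw2a 3).mp h) (by decide)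
  have n3w2 : ¬ G.Adj (y 3) w2 := fun h => nw23 h.symm
  have new20 := hw2_ne 0
  have ne0w2 := (hw2_ne 0).symm
  have new21 := hw2_ne 1
  have ne1w2 := (hw2_ne 1).symm
  have new22 := hw2_ne 2
  have ne2w2 := (hw2_ne 2).symm
  have new23 := hw2_ne 3
  have ne3w2 := (hw2_ne 3).symm
  have aw2u := huww2.symm
  have neuw2 : u ≠ w2 := huww2.ne
  have new2u : w2 ≠ u := huww2.ne'
  have aw3A : G.Adj w3 (y 2) := (hw3a 2).mpr rfl
  have aAw3 := aw3A.symm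
  have nw30 : ¬ G.Adj w3 (y 0) := fun h => absurd ((hw3a 0).mp h) (by decide)
  have n0w3 : ¬ G.Adj (y 0) w3 := fun h => nw30 h.symm
  have nw31 : ¬ G.Adj w3 (y 1) := fun h => absurd ((hw3a 1).mp h) (by decide)
  have n1w3 : ¬ G.Adj (y 1) w3 := fun h => nw31 h.symm
  have nw33 : ¬ G.Adj w3 (y 3) := fun h => absurd ((hw3a 3).mp h) (by decide)
  have n3w3 : ¬ G.Adj (y 3) w3 := fun h => nw33 h.symm
  have new30 := hw3_ne 0
  have ne0w3 := (hw3_ne 0).symm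
  have new31 := hw3_ne 1
  have ne1w3 := (hw3_ne 1).symm
  have new32 := hw3_ne 2
  have ne2w3 := (hw3_ne 2).symm
  have new33 := hw3_ne 3
  have ne3w3 := (hw3_ne 3).symm
  have aw3u := huww3.symm
  have neuw3 : u ≠ w3 := huww3.ne
  have new3u : w3 ≠ u := huww3.ne'
  have hnadjw2w1 : ¬ G.Adj w2 w1 := fun h => hnadjw1w2 h.symm
  have hnew2w1 : w2 ≠ w1 := hnew1w2.symm
  have hnadjw3w1 : ¬ G.Adj w3 w1 := fun h => hnadjw1w3 h.symm
  have hnew3w1 : w3 ≠ w1 := hnew1w3.symm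
  have hnadjw3w2 : ¬ G.Adj w3 w2 := fun h => hnadjw2w3 h.symm
  have hnew3w2 : w3 ≠ w2 := hnew2w3.symm
  refine config_contra G hl (![y 0, y 1, y 2, y 3, u, w1, w2, w3] : Fin 8 → V) ?_
    (![![false,true,false,true,true,false,false,false],
      ![true,false,true,false,false,false,false,false],
      ![false,true,false,true,false,true,true,true],
      ![true,false,true,false,false,false,false,false],
      ![true,false,false,false,false,true,true,true],
      ![false,false,true,false,true,false,false,false],
      ![false,false,true,false,true,false,false,false],
      ![false,false,true,false,true,false,false,false]] : Fin 8 → Fin 8 → Bool) ?_ ![(33 : ℝ), (28 : ℝ), (51 : ℝ), (28 : ℝ), (43 : ℝ), (31 : ℝ), (31 : ℝ), (31 : ℝ)] ![(-49 : ℝ), (-44 : ℝ), (-2 : ℝ), (-44 : ℝ), (34 : ℝ), (29 : ℝ), (29 : ℝ), (29 : ℝ)] ?_ ?_ ?_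
  · intro p q hpq
    fin_cases p <;> fin_cases q <;>
      first
        | rfl
        | exact absurd hpq (by assumption)
        | exact absurd hpq.symm (by assumption)
  · intro p q
    fin_cases p <;> fin_cases q <;>
      first
        | exact iff_of_true (by assumption) rfl
        | exact iff_of_false (by first | assumption | exact G.irrefl) (by decide)
  · norm_num [Fin.sum_univ_succ]
  · norm_num [Fin.sum_univ_succ]
  · norm_num [Fin.sum_univ_succ]

open Matrix in
lemma config_A_low {V : Type*} [Fintype V] [DecidableEq V] (G : SimpleGraph V)
    {adj : DecidableRel G.Adj}
    {dp : DecidablePred fun i : V => 1 < (adjMatrix_isHermitian G).eigenvalues i}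
    (hl : (Finset.univ.filter fun i : V =>
        1 < (adjMatrix_isHermitian G).eigenvalues i).card ≤ 1)
    (y : Fin 4 → V) (hyinj : Function.Injective y)
    (hyadj : ∀ a b : Fin 4, G.Adj (y a) (y b) ↔ (b = a + 1 ∨ b = a - 1))
    (u w1 w2 : V)
    (hu_ne : ∀ k, u ≠ y k) (hu : ∀ k, G.Adj u (y k) ↔ k = 0)
    (hw1_ne : ∀ k, w1 ≠ y k) (hw1a : ∀ k, G.Adj w1 (y k) ↔ k = 2)
    (hw2_ne : ∀ k, w2 ≠ y k) (hw2a : ∀ k, G.Adj w2 (y k) ↔ k = 2)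
    (hnew1w2 : w1 ≠ w2) (hnadjw1w2 : ¬ G.Adj w1 w2)
    (hnuww1 : ¬ G.Adj u w1)
    (hnuww2 : ¬ G.Adj u w2)
    : False := by
  have a01 : G.Adj (y 0) (y 1) := (hyadj 0 1).mpr (by decide)
  have a12 : G.Adj (y 1) (y 2) := (hyadj 1 2).mpr (by decide)
  have a23 : G.Adj (y 2) (y 3) := (hyadj 2 3).mpr (by decide)
  have a30 : G.Adj (y 3) (y 0) := (hyadj 3 0).mpr (by decide)
  have a10 := a01.symm
  have a21 := a12.symm
  have a32 := a23.symm
  have a03 := a30.symm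
  have n02 : ¬ G.Adj (y 0) (y 2) := fun h => absurd ((hyadj 0 2).mp h) (by decide)
  have n13 : ¬ G.Adj (y 1) (y 3) := fun h => absurd ((hyadj 1 3).mp h) (by decide)
  have n20 : ¬ G.Adj (y 2) (y 0) := fun h => n02 h.symm
  have n31 : ¬ G.Adj (y 3) (y 1) := fun h => n13 h.symm
  have au0 : G.Adj u (y 0) := (hu 0).mpr rfl
  have a0u := au0.symm
  have nu1 : ¬ G.Adj u (y 1) := fun h => absurd ((hu 1).mp h) (by decide)
  have nu2 : ¬ G.Adj u (y 2) := fun h => absurd ((hu 2).mp h) (by decide)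
  have nu3 : ¬ G.Adj u (y 3) := fun h => absurd ((hu 3).mp h) (by decide)
  have n1u : ¬ G.Adj (y 1) u := fun h => nu1 h.symm
  have n2u : ¬ G.Adj (y 2) u := fun h => nu2 h.symm
  have n3u : ¬ G.Adj (y 3) u := fun h => nu3 h.symm
  have ne01 : y 0 ≠ y 1 := fun h => absurd (hyinj h) (by decide)
  have ne02 : y 0 ≠ y 2 := fun h => absurd (hyinj h) (by decide)
  have ne03 : y 0 ≠ y 3 := fun h => absurd (hyinj h) (by decide)
  have ne12 : y 1 ≠ y 2 := fun h => absurd (hyinj h) (by decide)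
  have ne13 : y 1 ≠ y 3 := fun h => absurd (hyinj h) (by decide)
  have ne23 : y 2 ≠ y 3 := fun h => absurd (hyinj h) (by decide)
  have neu0 := hu_ne 0
  have neu1 := hu_ne 1
  have neu2 := hu_ne 2
  have neu3 := hu_ne 3
  have aw1A : G.Adj w1 (y 2) := (hw1a 2).mpr rfl
  have aAw1 := aw1A.symm
  have nw10 : ¬ G.Adj w1 (y 0) := fun h => absurd ((hw1a 0).mp h) (by decide)
  have n0w1 : ¬ G.Adj (y 0) w1 := fun h => nw10 h.symm
  have nw11 : ¬ G.Adj w1 (y 1) := fun h => absurd ((hw1a 1).mp h) (by decide)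
  have n1w1 : ¬ G.Adj (y 1) w1 := fun h => nw11 h.symm
  have nw13 : ¬ G.Adj w1 (y 3) := fun h => absurd ((hw1a 3).mp h) (by decide)
  have n3w1 : ¬ G.Adj (y 3) w1 := fun h => nw13 h.symm
  have new10 := hw1_ne 0
  have ne0w1 := (hw1_ne 0).symm
  have new11 := hw1_ne 1
  have ne1w1 := (hw1_ne 1).symm
  have new12 := hw1_ne 2
  have ne2w1 := (hw1_ne 2).symm
  have new13 := hw1_ne 3
  have ne3w1 := (hw1_ne 3).symm
  have nw1u : ¬ G.Adj w1 u := fun h => hnuww1 h.symm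
  have neuw1 : u ≠ w1 := fun h => absurd ((hw1a 0).mp (h ▸ au0)) (by decide)
  have new1u : w1 ≠ u := fun h => neuw1 h.symm
  have aw2A : G.Adj w2 (y 2) := (hw2a 2).mpr rfl
  have aAw2 := aw2A.symm
  have nw20 : ¬ G.Adj w2 (y 0) := fun h => absurd ((hw2a 0).mp h) (by decide)
  have n0w2 : ¬ G.Adj (y 0) w2 := fun h => nw20 h.symm
  have nw21 : ¬ G.Adj w2 (y 1) := fun h => absurd ((hw2a 1).mp h) (by decide)
  have n1w2 : ¬ G.Adj (y 1) w2 := fun h => nw21 h.symm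
  have nw23 : ¬ G.Adj w2 (y 3) := fun h => absurd ((hw2a 3).mp h) (by decide)
  have n3w2 : ¬ G.Adj (y 3) w2 := fun h => nw23 h.symm
  have new20 := hw2_ne 0
  have ne0w2 := (hw2_ne 0).symm
  have new21 := hw2_ne 1
  have ne1w2 := (hw2_ne 1).symm
  have new22 := hw2_ne 2
  have ne2w2 := (hw2_ne 2).symm
  have new23 := hw2_ne 3
  have ne3w2 := (hw2_ne 3).symm
  have nw2u : ¬ G.Adj w2 u := fun h => hnuww2 h.symm
  have neuw2 : u ≠ w2 := fun h => absurd ((hw2a 0).mp (h ▸ au0)) (by decide)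
  have new2u : w2 ≠ u := fun h => neuw2 h.symm
  have hnadjw2w1 : ¬ G.Adj w2 w1 := fun h => hnadjw1w2 h.symm
  have hnew2w1 : w2 ≠ w1 := hnew1w2.symm
  refine config_contra G hl (![y 0, y 1, y 2, y 3, u, w1, w2] : Fin 7 → V) ?_
    (![![false,true,false,true,true,false,false],
      ![true,false,true,false,false,false,false],
      ![false,true,false,true,false,true,true],
      ![true,false,true,false,false,false,false],
      ![true,false,false,false,false,false,false],
      ![false,false,true,false,false,false,false],
      ![false,false,true,false,false,false,false]] : Fin 7 → Fin 7 → Bool) ?_ ![(44 : ℝ), (42 : ℝ), (56 : ℝ), (42 : ℝ), (19 : ℝ), (24 : ℝ), (24 : ℝ)] ![(56 : ℝ), (10 : ℝ), (-44 : ℝ), (10 : ℝ), (47 : ℝ), (-36 : ℝ), (-36 : ℝ)] ?_ ?_ ?_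
  · intro p q hpq
    fin_cases p <;> fin_cases q <;>
      first
        | rfl
        | exact absurd hpq (by assumption)
        | exact absurd hpq.symm (by assumption)
  · intro p q
    fin_cases p <;> fin_cases q <;>
      first
        | exact iff_of_true (by assumption) rfl
        | exact iff_of_false (by first | assumption | exact G.irrefl) (by decide)
  · norm_num [Fin.sum_univ_succ]
  · norm_num [Fin.sum_univ_succ]
  · norm_num [Fin.sum_univ_succ]

open Matrix in
lemma config_B_up {V : Type*} [Fintype V] [DecidableEq V] (G : SimpleGraph V)
    {adj : DecidableRel G.Adj}
    {dp : DecidablePred fun i : V => 1 < (adjMatrix_isHermitian G).eigenvalues i}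
    (hl : (Finset.univ.filter fun i : V =>
        1 < (adjMatrix_isHermitian G).eigenvalues i).card ≤ 1)
    (y : Fin 4 → V) (hyinj : Function.Injective y)
    (hyadj : ∀ a b : Fin 4, G.Adj (y a) (y b) ↔ (b = a + 1 ∨ b = a - 1))
    (u w1 w2 : V)
    (hu_ne : ∀ k, u ≠ y k) (hu : ∀ k, G.Adj u (y k) ↔ k = 0)
    (hw1_ne : ∀ k, w1 ≠ y k) (hw1a : ∀ k, G.Adj w1 (y k) ↔ k = 1)
    (hw2_ne : ∀ k, w2 ≠ y k) (hw2a : ∀ k, G.Adj w2 (y k) ↔ k = 1)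
    (hnew1w2 : w1 ≠ w2) (hnadjw1w2 : ¬ G.Adj w1 w2)
    (huww1 : G.Adj u w1)
    (huww2 : G.Adj u w2)
    : False := by
  have a01 : G.Adj (y 0) (y 1) := (hyadj 0 1).mpr (by decide)
  have a12 : G.Adj (y 1) (y 2) := (hyadj 1 2).mpr (by decide)
  have a23 : G.Adj (y 2) (y 3) := (hyadj 2 3).mpr (by decide)
  have a30 : G.Adj (y 3) (y 0) := (hyadj 3 0).mpr (by decide)
  have a10 := a01.symm
  have a21 := a12.symm
  have a32 := a23.symm
  have a03 := a30.symm
  have n02 : ¬ G.Adj (y 0) (y 2) := fun h => absurd ((hyadj 0 2).mp h) (by decide)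
  have n13 : ¬ G.Adj (y 1) (y 3) := fun h => absurd ((hyadj 1 3).mp h) (by decide)
  have n20 : ¬ G.Adj (y 2) (y 0) := fun h => n02 h.symm
  have n31 : ¬ G.Adj (y 3) (y 1) := fun h => n13 h.symm
  have au0 : G.Adj u (y 0) := (hu 0).mpr rfl
  have a0u := au0.symm
  have nu1 : ¬ G.Adj u (y 1) := fun h => absurd ((hu 1).mp h) (by decide)
  have nu2 : ¬ G.Adj u (y 2) := fun h => absurd ((hu 2).mp h) (by decide)
  have nu3 : ¬ G.Adj u (y 3) := fun h => absurd ((hu 3).mp h) (by decide)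
  have n1u : ¬ G.Adj (y 1) u := fun h => nu1 h.symm
  have n2u : ¬ G.Adj (y 2) u := fun h => nu2 h.symm
  have n3u : ¬ G.Adj (y 3) u := fun h => nu3 h.symm
  have ne01 : y 0 ≠ y 1 := fun h => absurd (hyinj h) (by decide)
  have ne02 : y 0 ≠ y 2 := fun h => absurd (hyinj h) (by decide)
  have ne03 : y 0 ≠ y 3 := fun h => absurd (hyinj h) (by decide)
  have ne12 : y 1 ≠ y 2 := fun h => absurd (hyinj h) (by decide)
  have ne13 : y 1 ≠ y 3 := fun h => absurd (hyinj h) (by decide)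
  have ne23 : y 2 ≠ y 3 := fun h => absurd (hyinj h) (by decide)
  have neu0 := hu_ne 0
  have neu1 := hu_ne 1
  have neu2 := hu_ne 2
  have neu3 := hu_ne 3
  have aw1A : G.Adj w1 (y 1) := (hw1a 1).mpr rfl
  have aAw1 := aw1A.symm
  have nw10 : ¬ G.Adj w1 (y 0) := fun h => absurd ((hw1a 0).mp h) (by decide)
  have n0w1 : ¬ G.Adj (y 0) w1 := fun h => nw10 h.symm
  have nw12 : ¬ G.Adj w1 (y 2) := fun h => absurd ((hw1a 2).mp h) (by decide)
  have n2w1 : ¬ G.Adj (y 2) w1 := fun h => nw12 h.symm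
  have nw13 : ¬ G.Adj w1 (y 3) := fun h => absurd ((hw1a 3).mp h) (by decide)
  have n3w1 : ¬ G.Adj (y 3) w1 := fun h => nw13 h.symm
  have new10 := hw1_ne 0
  have ne0w1 := (hw1_ne 0).symm
  have new11 := hw1_ne 1
  have ne1w1 := (hw1_ne 1).symm
  have new12 := hw1_ne 2
  have ne2w1 := (hw1_ne 2).symm
  have new13 := hw1_ne 3
  have ne3w1 := (hw1_ne 3).symm
  have aw1u := huww1.symm
  have neuw1 : u ≠ w1 := huww1.ne
  have new1u : w1 ≠ u := huww1.ne'
  have aw2A : G.Adj w2 (y 1) := (hw2a 1).mpr rfl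
  have aAw2 := aw2A.symm
  have nw20 : ¬ G.Adj w2 (y 0) := fun h => absurd ((hw2a 0).mp h) (by decide)
  have n0w2 : ¬ G.Adj (y 0) w2 := fun h => nw20 h.symm
  have nw22 : ¬ G.Adj w2 (y 2) := fun h => absurd ((hw2a 2).mp h) (by decide)
  have n2w2 : ¬ G.Adj (y 2) w2 := fun h => nw22 h.symm
  have nw23 : ¬ G.Adj w2 (y 3) := fun h => absurd ((hw2a 3).mp h) (by decide)
  have n3w2 : ¬ G.Adj (y 3) w2 := fun h => nw23 h.symm
  have new20 := hw2_ne 0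
  have ne0w2 := (hw2_ne 0).symm
  have new21 := hw2_ne 1
  have ne1w2 := (hw2_ne 1).symm
  have new22 := hw2_ne 2
  have ne2w2 := (hw2_ne 2).symm
  have new23 := hw2_ne 3
  have ne3w2 := (hw2_ne 3).symm
  have aw2u := huww2.symm
  have neuw2 : u ≠ w2 := huww2.ne
  have new2u : w2 ≠ u := huww2.ne'
  have hnadjw2w1 : ¬ G.Adj w2 w1 := fun h => hnadjw1w2 h.symm
  have hnew2w1 : w2 ≠ w1 := hnew1w2.symm
  refine config_contra G hl (![y 0, y 1, y 2, y 3, u, w1, w2] : Fin 7 → V) ?_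
    (![![false,true,false,true,true,false,false],
      ![true,false,true,false,false,true,true],
      ![false,true,false,true,false,false,false],
      ![true,false,true,false,false,false,false],
      ![true,false,false,false,false,true,true],
      ![false,true,false,false,true,false,false],
      ![false,true,false,false,true,false,false]] : Fin 7 → Fin 7 → Bool) ?_ ![(44 : ℝ), (51 : ℝ), (29 : ℝ), (27 : ℝ), (41 : ℝ), (34 : ℝ), (34 : ℝ)] ![(-17 : ℝ), (-3 : ℝ), (-51 : ℝ), (-58 : ℝ), (41 : ℝ), (32 : ℝ), (32 : ℝ)] ?_ ?_ ?_
  · intro p q hpq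
    fin_cases p <;> fin_cases q <;>
      first
        | rfl
        | exact absurd hpq (by assumption)
        | exact absurd hpq.symm (by assumption)
  · intro p q
    fin_cases p <;> fin_cases q <;>
      first
        | exact iff_of_true (by assumption) rfl
        | exact iff_of_false (by first | assumption | exact G.irrefl) (by decide)
  · norm_num [Fin.sum_univ_succ]
  · norm_num [Fin.sum_univ_succ]
  · norm_num [Fin.sum_univ_succ]

open Matrix in
lemma config_B_low {V : Type*} [Fintype V] [DecidableEq V] (G : SimpleGraph V)
    {adj : DecidableRel G.Adj}
    {dp : DecidablePred fun i : V => 1 < (adjMatrix_isHermitian G).eigenvalues i}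
    (hl : (Finset.univ.filter fun i : V =>
        1 < (adjMatrix_isHermitian G).eigenvalues i).card ≤ 1)
    (y : Fin 4 → V) (hyinj : Function.Injective y)
    (hyadj : ∀ a b : Fin 4, G.Adj (y a) (y b) ↔ (b = a + 1 ∨ b = a - 1))
    (u w1 w2 w3 : V)
    (hu_ne : ∀ k, u ≠ y k) (hu : ∀ k, G.Adj u (y k) ↔ k = 0)
    (hw1_ne : ∀ k, w1 ≠ y k) (hw1a : ∀ k, G.Adj w1 (y k) ↔ k = 1)
    (hw2_ne : ∀ k, w2 ≠ y k) (hw2a : ∀ k, G.Adj w2 (y k) ↔ k = 1)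
    (hw3_ne : ∀ k, w3 ≠ y k) (hw3a : ∀ k, G.Adj w3 (y k) ↔ k = 1)
    (hnew1w2 : w1 ≠ w2) (hnadjw1w2 : ¬ G.Adj w1 w2)
    (hnew1w3 : w1 ≠ w3) (hnadjw1w3 : ¬ G.Adj w1 w3)
    (hnew2w3 : w2 ≠ w3) (hnadjw2w3 : ¬ G.Adj w2 w3)
    (hnuww1 : ¬ G.Adj u w1)
    (hnuww2 : ¬ G.Adj u w2)
    (hnuww3 : ¬ G.Adj u w3)
    : False := by
  have a01 : G.Adj (y 0) (y 1) := (hyadj 0 1).mpr (by decide)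
  have a12 : G.Adj (y 1) (y 2) := (hyadj 1 2).mpr (by decide)
  have a23 : G.Adj (y 2) (y 3) := (hyadj 2 3).mpr (by decide)
  have a30 : G.Adj (y 3) (y 0) := (hyadj 3 0).mpr (by decide)
  have a10 := a01.symm
  have a21 := a12.symm
  have a32 := a23.symm
  have a03 := a30.symm
  have n02 : ¬ G.Adj (y 0) (y 2) := fun h => absurd ((hyadj 0 2).mp h) (by decide)
  have n13 : ¬ G.Adj (y 1) (y 3) := fun h => absurd ((hyadj 1 3).mp h) (by decide)
  have n20 : ¬ G.Adj (y 2) (y 0) := fun h => n02 h.symm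
  have n31 : ¬ G.Adj (y 3) (y 1) := fun h => n13 h.symm
  have au0 : G.Adj u (y 0) := (hu 0).mpr rfl
  have a0u := au0.symm
  have nu1 : ¬ G.Adj u (y 1) := fun h => absurd ((hu 1).mp h) (by decide)
  have nu2 : ¬ G.Adj u (y 2) := fun h => absurd ((hu 2).mp h) (by decide)
  have nu3 : ¬ G.Adj u (y 3) := fun h => absurd ((hu 3).mp h) (by decide)
  have n1u : ¬ G.Adj (y 1) u := fun h => nu1 h.symm
  have n2u : ¬ G.Adj (y 2) u := fun h => nu2 h.symm
  have n3u : ¬ G.Adj (y 3) u := fun h => nu3 h.symm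
  have ne01 : y 0 ≠ y 1 := fun h => absurd (hyinj h) (by decide)
  have ne02 : y 0 ≠ y 2 := fun h => absurd (hyinj h) (by decide)
  have ne03 : y 0 ≠ y 3 := fun h => absurd (hyinj h) (by decide)
  have ne12 : y 1 ≠ y 2 := fun h => absurd (hyinj h) (by decide)
  have ne13 : y 1 ≠ y 3 := fun h => absurd (hyinj h) (by decide)
  have ne23 : y 2 ≠ y 3 := fun h => absurd (hyinj h) (by decide)
  have neu0 := hu_ne 0
  have neu1 := hu_ne 1
  have neu2 := hu_ne 2
  have neu3 := hu_ne 3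
  have aw1A : G.Adj w1 (y 1) := (hw1a 1).mpr rfl
  have aAw1 := aw1A.symm
  have nw10 : ¬ G.Adj w1 (y 0) := fun h => absurd ((hw1a 0).mp h) (by decide)
  have n0w1 : ¬ G.Adj (y 0) w1 := fun h => nw10 h.symm
  have nw12 : ¬ G.Adj w1 (y 2) := fun h => absurd ((hw1a 2).mp h) (by decide)
  have n2w1 : ¬ G.Adj (y 2) w1 := fun h => nw12 h.symm
  have nw13 : ¬ G.Adj w1 (y 3) := fun h => absurd ((hw1a 3).mp h) (by decide)
  have n3w1 : ¬ G.Adj (y 3) w1 := fun h => nw13 h.symm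
  have new10 := hw1_ne 0
  have ne0w1 := (hw1_ne 0).symm
  have new11 := hw1_ne 1
  have ne1w1 := (hw1_ne 1).symm
  have new12 := hw1_ne 2
  have ne2w1 := (hw1_ne 2).symm
  have new13 := hw1_ne 3
  have ne3w1 := (hw1_ne 3).symm
  have nw1u : ¬ G.Adj w1 u := fun h => hnuww1 h.symm
  have neuw1 : u ≠ w1 := fun h => absurd ((hw1a 0).mp (h ▸ au0)) (by decide)
  have new1u : w1 ≠ u := fun h => neuw1 h.symm
  have aw2A : G.Adj w2 (y 1) := (hw2a 1).mpr rfl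
  have aAw2 := aw2A.symm
  have nw20 : ¬ G.Adj w2 (y 0) := fun h => absurd ((hw2a 0).mp h) (by decide)
  have n0w2 : ¬ G.Adj (y 0) w2 := fun h => nw20 h.symm
  have nw22 : ¬ G.Adj w2 (y 2) := fun h => absurd ((hw2a 2).mp h) (by decide)
  have n2w2 : ¬ G.Adj (y 2) w2 := fun h => nw22 h.symm
  have nw23 : ¬ G.Adj w2 (y 3) := fun h => absurd ((hw2a 3).mp h) (by decide)
  have n3w2 : ¬ G.Adj (y 3) w2 := fun h => nw23 h.symm
  have new20 := hw2_ne 0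
  have ne0w2 := (hw2_ne 0).symm
  have new21 := hw2_ne 1
  have ne1w2 := (hw2_ne 1).symm
  have new22 := hw2_ne 2
  have ne2w2 := (hw2_ne 2).symm
  have new23 := hw2_ne 3
  have ne3w2 := (hw2_ne 3).symm
  have nw2u : ¬ G.Adj w2 u := fun h => hnuww2 h.symm
  have neuw2 : u ≠ w2 := fun h => absurd ((hw2a 0).mp (h ▸ au0)) (by decide)
  have new2u : w2 ≠ u := fun h => neuw2 h.symm
  have aw3A : G.Adj w3 (y 1) := (hw3a 1).mpr rfl
  have aAw3 := aw3A.symm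
  have nw30 : ¬ G.Adj w3 (y 0) := fun h => absurd ((hw3a 0).mp h) (by decide)
  have n0w3 : ¬ G.Adj (y 0) w3 := fun h => nw30 h.symm
  have nw32 : ¬ G.Adj w3 (y 2) := fun h => absurd ((hw3a 2).mp h) (by decide)
  have n2w3 : ¬ G.Adj (y 2) w3 := fun h => nw32 h.symm
  have nw33 : ¬ G.Adj w3 (y 3) := fun h => absurd ((hw3a 3).mp h) (by decide)
  have n3w3 : ¬ G.Adj (y 3) w3 := fun h => nw33 h.symm
  have new30 := hw3_ne 0
  have ne0w3 := (hw3_ne 0).symm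
  have new31 := hw3_ne 1
  have ne1w3 := (hw3_ne 1).symm
  have new32 := hw3_ne 2
  have ne2w3 := (hw3_ne 2).symm
  have new33 := hw3_ne 3
  have ne3w3 := (hw3_ne 3).symm
  have nw3u : ¬ G.Adj w3 u := fun h => hnuww3 h.symm
  have neuw3 : u ≠ w3 := fun h => absurd ((hw3a 0).mp (h ▸ au0)) (by decide)
  have new3u : w3 ≠ u := fun h => neuw3 h.symm
  have hnadjw2w1 : ¬ G.Adj w2 w1 := fun h => hnadjw1w2 h.symm
  have hnew2w1 : w2 ≠ w1 := hnew1w2.symm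
  have hnadjw3w1 : ¬ G.Adj w3 w1 := fun h => hnadjw1w3 h.symm
  have hnew3w1 : w3 ≠ w1 := hnew1w3.symm
  have hnadjw3w2 : ¬ G.Adj w3 w2 := fun h => hnadjw2w3 h.symm
  have hnew3w2 : w3 ≠ w2 := hnew2w3.symm
  refine config_contra G hl (![y 0, y 1, y 2, y 3, u, w1, w2, w3] : Fin 8 → V) ?_
    (![![false,true,false,true,true,false,false,false],
      ![true,false,true,false,false,true,true,true],
      ![false,true,false,true,false,false,false,false],
      ![true,false,true,false,false,false,false,false],
      ![true,false,false,false,false,false,false,false],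
      ![false,true,false,false,false,false,false,false],
      ![false,true,false,false,false,false,false,false],
      ![false,true,false,false,false,false,false,false]] : Fin 8 → Fin 8 → Bool) ?_ ![(44 : ℝ), (61 : ℝ), (37 : ℝ), (32 : ℝ), (17 : ℝ), (24 : ℝ), (24 : ℝ), (24 : ℝ)] ![(-44 : ℝ), (36 : ℝ), (-10 : ℝ), (-47 : ℝ), (-39 : ℝ), (32 : ℝ), (32 : ℝ), (32 : ℝ)] ?_ ?_ ?_
  · intro p q hpq
    fin_cases p <;> fin_cases q <;>
      first
        | rfl
        | exact absurd hpq (by assumption)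
        | exact absurd hpq.symm (by assumption)
  · intro p q
    fin_cases p <;> fin_cases q <;>
      first
        | exact iff_of_true (by assumption) rfl
        | exact iff_of_false (by first | assumption | exact G.irrefl) (by decide)
  · norm_num [Fin.sum_univ_succ]
  · norm_num [Fin.sum_univ_succ]
  · norm_num [Fin.sum_univ_succ]

/-- in the girth-4 setting, for every `i` and every `u ∈ T_{x_i}`, the number
of neighbors of `u` in `T_{x_{i+2}}` lies between `|T_{x_{i+2}}| − 1` and `2`, and for
`j ∈ {i−1, i+1}` the number of neighbors of `u` in `T_{x_j}` lies between `|T_{x_j}| − 2`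
and `1`. -/
theorem girth_four_degrees_between_pendant_classes {V : Type*} [Fintype V] [DecidableEq V] (G : SimpleGraph V)
    (hconn : G.Connected) (htf : G.CliqueFree 3)
    (hl : eigCount G (fun t => 1 < t) ≤ 1) (hplanar : WagnerPlanar G)
    (hgirth : G.egirth = 4) (x : Fin 4 → V) (hinj : Function.Injective x)
    (hcyc : ∀ i, G.Adj (x i) (x (i + 1))) :
    ∀ i : Fin 4, ∀ u ∈ TS G x {i},
      ((TS G x {i + 2}).ncard - 1 ≤ {w : V | w ∈ TS G x {i + 2} ∧ G.Adj u w}.ncard ∧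
        {w : V | w ∈ TS G x {i + 2} ∧ G.Adj u w}.ncard ≤ 2) ∧
      (∀ j : Fin 4, j = i - 1 ∨ j = i + 1 →
        (TS G x {j}).ncard - 2 ≤ {w : V | w ∈ TS G x {j} ∧ G.Adj u w}.ncard ∧
          {w : V | w ∈ TS G x {j} ∧ G.Adj u w}.ncard ≤ 1) := by
  classical
  unfold eigCount at hl
  have hl' : (Finset.univ.filter fun i : V =>
      1 < (adjMatrix_isHermitian G).eigenvalues i).card ≤ 1 := hl
  have htri : ∀ a b c : V, G.Adj a b → G.Adj a c → G.Adj b c → False := by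
    intro a b c hab hac hbc
    exact htf {a, b, c} (SimpleGraph.is3Clique_triple_iff.mpr ⟨hab, hac, hbc⟩)
  have e11 : ∀ k : Fin 4, k + 1 + 1 = k + 2 := by decide
  have hdiag : ∀ k : Fin 4, ¬ G.Adj (x k) (x (k + 2)) := by
    intro k h
    have h2 := hcyc (k + 1)
    rw [e11 k] at h2
    exact htri (x k) (x (k + 1)) (x (k + 2)) (hcyc k) h h2
  have hsub1 : ∀ a : Fin 4, a - 1 + 1 = a := by decide
  have hcases4 : ∀ a b : Fin 4, b = a ∨ b = a + 2 ∨ b = a + 1 ∨ b = a - 1 := by decide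
  have hxadj : ∀ a b : Fin 4, G.Adj (x a) (x b) ↔ (b = a + 1 ∨ b = a - 1) := by
    intro a b
    constructor
    · intro h
      rcases hcases4 a b with hba | hba | hba | hba
      · rw [hba] at h; exact absurd h G.irrefl
      · rw [hba] at h; exact absurd h (hdiag a)
      · exact Or.inl hba
      · exact Or.inr hba
    · intro h
      rcases h with h | h
      · rw [h]; exact hcyc a
      · rw [h]
        have h2 := (hcyc (b)).symm
        rw [show b + 1 = a from by rw [h, hsub1]] at h2
        rw [← h]
        exact h2
  -- extraction helpers
  have ex2 : ∀ S : Set V, 2 ≤ S.ncard → ∃ a b : V, a ∈ S ∧ b ∈ S ∧ a ≠ b := by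
    intro S h
    obtain ⟨t, hts, htc⟩ := Set.exists_subset_card_eq h
    obtain ⟨a, b, hab, rfl⟩ := Set.ncard_eq_two.mp htc
    exact ⟨a, b, hts (by simp), hts (by simp), hab⟩
  have ex3 : ∀ S : Set V, 3 ≤ S.ncard →
      ∃ a b c : V, a ∈ S ∧ b ∈ S ∧ c ∈ S ∧ a ≠ b ∧ a ≠ c ∧ b ≠ c := by
    intro S h
    obtain ⟨t, hts, htc⟩ := Set.exists_subset_card_eq h
    obtain ⟨a, b, c, hab, hac, hbc, rfl⟩ := Set.ncard_eq_three.mp htc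
    exact ⟨a, b, c, hts (by simp), hts (by simp), hts (by simp), hab, hac, hbc⟩
  intro i u hu
  obtain ⟨hur, hua⟩ := hu
  have hua' : ∀ k, G.Adj u (x k) ↔ k = i := fun k => (hua k).trans Set.mem_singleton_iff
  have hu_ne : ∀ k, u ≠ x k := fun k h => hur ⟨k, h.symm⟩
  have hsplit : ∀ j : Fin 4, (TS G x {j}).ncard ≤
      ({w : V | w ∈ TS G x {j} ∧ G.Adj u w}).ncard +
      ({w : V | w ∈ TS G x {j} ∧ ¬ G.Adj u w}).ncard := by
    intro j
    have hsub : TS G x {j} ⊆ {w : V | w ∈ TS G x {j} ∧ G.Adj u w} ∪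
        {w : V | w ∈ TS G x {j} ∧ ¬ G.Adj u w} := by
      intro w hw
      by_cases h : G.Adj u w
      · exact Or.inl ⟨hw, h⟩
      · exact Or.inr ⟨hw, h⟩
    exact le_trans (Set.ncard_le_ncard hsub (Set.toFinite _)) (Set.ncard_union_le _ _)
  -- rotated cycle
  set y : Fin 4 → V := fun k => x (k + i) with hydef
  have hyinj : Function.Injective y := fun a b h => add_right_cancel (hinj h)
  have harith : ∀ (i a b : Fin 4),
      ((b + i = a + i + 1) ∨ (b + i = a + i - 1)) ↔ ((b = a + 1) ∨ (b = a - 1)) := by decide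
  have hyadj : ∀ a b : Fin 4, G.Adj (y a) (y b) ↔ (b = a + 1 ∨ b = a - 1) :=
    fun a b => (hxadj (a + i) (b + i)).trans (harith i a b)
  have hanch0 : ∀ (i' c k : Fin 4), (k + i' = i' + c) ↔ (k = c) := by decide
  have hanch : ∀ (c : Fin 4) (k : Fin 4), (k + i = i + c) ↔ (k = c) := hanch0 i
  have hu0 : ∀ k, G.Adj u (y k) ↔ k = 0 := by
    intro k
    refine (hua' (k + i)).trans ?_
    have := hanch 0 k
    rw [add_zero] at this
    exact this
  have huy_ne : ∀ k, u ≠ y k := fun k => hu_ne (k + i)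
  -- reflected cycle
  set z : Fin 4 → V := fun k => x (i - k) with hzdef
  have hzscomp0 : ∀ (i' a b : Fin 4), i' - a = i' - b → a = b := by decide
  have hzscomp : ∀ a b : Fin 4, i - a = i - b → a = b := hzscomp0 i
  have hzinj : Function.Injective z := fun a b h => hzscomp a b (hinj h)
  have harith20 : ∀ (i' a b : Fin 4),
      ((i' - b = i' - a + 1) ∨ (i' - b = i' - a - 1)) ↔ ((b = a + 1) ∨ (b = a - 1)) := by decide
  have harith2 : ∀ (a b : Fin 4),
      ((i - b = i - a + 1) ∨ (i - b = i - a - 1)) ↔ ((b = a + 1) ∨ (b = a - 1)) := harith20 i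
  have hzadj : ∀ a b : Fin 4, G.Adj (z a) (z b) ↔ (b = a + 1 ∨ b = a - 1) :=
    fun a b => (hxadj (i - a) (i - b)).trans (harith2 a b)
  have hzanch0 : ∀ (i' c k : Fin 4), (i' - k = i' - c) ↔ (k = c) := by decide
  have hzanch : ∀ (c : Fin 4) (k : Fin 4), (i - k = i - c) ↔ (k = c) := hzanch0 i
  have hu0z : ∀ k, G.Adj u (z k) ↔ k = 0 := by
    intro k
    refine (hua' (i - k)).trans ?_
    have h := hzanch 0 k
    rw [sub_zero] at h
    exact h
  have huz_ne : ∀ k, u ≠ z k := fun k => hu_ne (i - k)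
  -- claim A upper
  have claimAup : ({w : V | w ∈ TS G x {i + 2} ∧ G.Adj u w}).ncard ≤ 2 := by
    by_contra hcon
    obtain ⟨w1, w2, w3, hm1, hm2, hm3, h12, h13, h23⟩ :=
      ex3 _ (by omega : 3 ≤ ({w : V | w ∈ TS G x {i + 2} ∧ G.Adj u w}).ncard)
    obtain ⟨⟨hw1r, hw1s⟩, huw1⟩ := hm1
    obtain ⟨⟨hw2r, hw2s⟩, huw2⟩ := hm2
    obtain ⟨⟨hw3r, hw3s⟩, huw3⟩ := hm3
    have hw1a : ∀ k, G.Adj w1 (y k) ↔ k = 2 := fun k =>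
      ((hw1s (k + i)).trans Set.mem_singleton_iff).trans
        (by have := hanch 2 k; rwa [show i + 2 = i + 2 from rfl] at this)
    have hw2a : ∀ k, G.Adj w2 (y k) ↔ k = 2 := fun k =>
      ((hw2s (k + i)).trans Set.mem_singleton_iff).trans (hanch 2 k)
    have hw3a : ∀ k, G.Adj w3 (y k) ↔ k = 2 := fun k =>
      ((hw3s (k + i)).trans Set.mem_singleton_iff).trans (hanch 2 k)
    have hw1_ne : ∀ k, w1 ≠ y k := fun k h => hw1r ⟨k + i, h.symm⟩
    have hw2_ne : ∀ k, w2 ≠ y k := fun k h => hw2r ⟨k + i, h.symm⟩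
    have hw3_ne : ∀ k, w3 ≠ y k := fun k h => hw3r ⟨k + i, h.symm⟩
    have hn12 : ¬ G.Adj w1 w2 := fun h => htri u w1 w2 huw1 huw2 h
    have hn13 : ¬ G.Adj w1 w3 := fun h => htri u w1 w3 huw1 huw3 h
    have hn23 : ¬ G.Adj w2 w3 := fun h => htri u w2 w3 huw2 huw3 h
    exact config_A_up G hl' y hyinj hyadj u w1 w2 w3 huy_ne hu0
      hw1_ne hw1a hw2_ne hw2a hw3_ne hw3a h12 hn12 h13 hn13 h23 hn23 huw1 huw2 huw3
  -- claim A lower (complement small)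
  have claimAlow : ({w : V | w ∈ TS G x {i + 2} ∧ ¬ G.Adj u w}).ncard ≤ 1 := by
    by_contra hcon
    obtain ⟨w1, w2, hm1, hm2, h12⟩ :=
      ex2 _ (by omega : 2 ≤ ({w : V | w ∈ TS G x {i + 2} ∧ ¬ G.Adj u w}).ncard)
    obtain ⟨⟨hw1r, hw1s⟩, hnuw1⟩ := hm1
    obtain ⟨⟨hw2r, hw2s⟩, hnuw2⟩ := hm2
    have hw1a : ∀ k, G.Adj w1 (y k) ↔ k = 2 := fun k =>
      ((hw1s (k + i)).trans Set.mem_singleton_iff).trans (hanch 2 k)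
    have hw2a : ∀ k, G.Adj w2 (y k) ↔ k = 2 := fun k =>
      ((hw2s (k + i)).trans Set.mem_singleton_iff).trans (hanch 2 k)
    have hw1_ne : ∀ k, w1 ≠ y k := fun k h => hw1r ⟨k + i, h.symm⟩
    have hw2_ne : ∀ k, w2 ≠ y k := fun k h => hw2r ⟨k + i, h.symm⟩
    have hn12 : ¬ G.Adj w1 w2 := fun h =>
      htri (y 2) w1 w2 ((hw1a 2).mpr rfl).symm ((hw2a 2).mpr rfl).symm h
    exact config_A_low G hl' y hyinj hyadj u w1 w2 huy_ne hu0
      hw1_ne hw1a hw2_ne hw2a h12 hn12 hnuw1 hnuw2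
  -- claim B for j = i + 1 (rotation y, anchor 1)
  have claimBup1 : ({w : V | w ∈ TS G x {i + 1} ∧ G.Adj u w}).ncard ≤ 1 := by
    by_contra hcon
    obtain ⟨w1, w2, hm1, hm2, h12⟩ :=
      ex2 _ (by omega : 2 ≤ ({w : V | w ∈ TS G x {i + 1} ∧ G.Adj u w}).ncard)
    obtain ⟨⟨hw1r, hw1s⟩, huw1⟩ := hm1
    obtain ⟨⟨hw2r, hw2s⟩, huw2⟩ := hm2
    have hw1a : ∀ k, G.Adj w1 (y k) ↔ k = 1 := fun k =>
      ((hw1s (k + i)).trans Set.mem_singleton_iff).trans (hanch 1 k)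
    have hw2a : ∀ k, G.Adj w2 (y k) ↔ k = 1 := fun k =>
      ((hw2s (k + i)).trans Set.mem_singleton_iff).trans (hanch 1 k)
    have hw1_ne : ∀ k, w1 ≠ y k := fun k h => hw1r ⟨k + i, h.symm⟩
    have hw2_ne : ∀ k, w2 ≠ y k := fun k h => hw2r ⟨k + i, h.symm⟩
    have hn12 : ¬ G.Adj w1 w2 := fun h => htri u w1 w2 huw1 huw2 h
    exact config_B_up G hl' y hyinj hyadj u w1 w2 huy_ne hu0
      hw1_ne hw1a hw2_ne hw2a h12 hn12 huw1 huw2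
  have claimBlow1 : ({w : V | w ∈ TS G x {i + 1} ∧ ¬ G.Adj u w}).ncard ≤ 2 := by
    by_contra hcon
    obtain ⟨w1, w2, w3, hm1, hm2, hm3, h12, h13, h23⟩ :=
      ex3 _ (by omega : 3 ≤ ({w : V | w ∈ TS G x {i + 1} ∧ ¬ G.Adj u w}).ncard)
    obtain ⟨⟨hw1r, hw1s⟩, hnuw1⟩ := hm1
    obtain ⟨⟨hw2r, hw2s⟩, hnuw2⟩ := hm2
    obtain ⟨⟨hw3r, hw3s⟩, hnuw3⟩ := hm3
    have hw1a : ∀ k, G.Adj w1 (y k) ↔ k = 1 := fun k =>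
      ((hw1s (k + i)).trans Set.mem_singleton_iff).trans (hanch 1 k)
    have hw2a : ∀ k, G.Adj w2 (y k) ↔ k = 1 := fun k =>
      ((hw2s (k + i)).trans Set.mem_singleton_iff).trans (hanch 1 k)
    have hw3a : ∀ k, G.Adj w3 (y k) ↔ k = 1 := fun k =>
      ((hw3s (k + i)).trans Set.mem_singleton_iff).trans (hanch 1 k)
    have hw1_ne : ∀ k, w1 ≠ y k := fun k h => hw1r ⟨k + i, h.symm⟩
    have hw2_ne : ∀ k, w2 ≠ y k := fun k h => hw2r ⟨k + i, h.symm⟩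
    have hw3_ne : ∀ k, w3 ≠ y k := fun k h => hw3r ⟨k + i, h.symm⟩
    have hn12 : ¬ G.Adj w1 w2 := fun h =>
      htri (y 1) w1 w2 ((hw1a 1).mpr rfl).symm ((hw2a 1).mpr rfl).symm h
    have hn13 : ¬ G.Adj w1 w3 := fun h =>
      htri (y 1) w1 w3 ((hw1a 1).mpr rfl).symm ((hw3a 1).mpr rfl).symm h
    have hn23 : ¬ G.Adj w2 w3 := fun h =>
      htri (y 1) w2 w3 ((hw2a 1).mpr rfl).symm ((hw3a 1).mpr rfl).symm h
    exact config_B_low G hl' y hyinj hyadj u w1 w2 w3 huy_ne hu0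
      hw1_ne hw1a hw2_ne hw2a hw3_ne hw3a h12 hn12 h13 hn13 h23 hn23 hnuw1 hnuw2 hnuw3
  -- claim B for j = i - 1 (reflection z, anchor 1 : z 1 = x (i - 1))
  have claimBup2 : ({w : V | w ∈ TS G x {i - 1} ∧ G.Adj u w}).ncard ≤ 1 := by
    by_contra hcon
    obtain ⟨w1, w2, hm1, hm2, h12⟩ :=
      ex2 _ (by omega : 2 ≤ ({w : V | w ∈ TS G x {i - 1} ∧ G.Adj u w}).ncard)
    obtain ⟨⟨hw1r, hw1s⟩, huw1⟩ := hm1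
    obtain ⟨⟨hw2r, hw2s⟩, huw2⟩ := hm2
    have hw1a : ∀ k, G.Adj w1 (z k) ↔ k = 1 := fun k =>
      ((hw1s (i - k)).trans Set.mem_singleton_iff).trans (hzanch 1 k)
    have hw2a : ∀ k, G.Adj w2 (z k) ↔ k = 1 := fun k =>
      ((hw2s (i - k)).trans Set.mem_singleton_iff).trans (hzanch 1 k)
    have hw1_ne : ∀ k, w1 ≠ z k := fun k h => hw1r ⟨i - k, h.symm⟩
    have hw2_ne : ∀ k, w2 ≠ z k := fun k h => hw2r ⟨i - k, h.symm⟩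
    have hn12 : ¬ G.Adj w1 w2 := fun h => htri u w1 w2 huw1 huw2 h
    exact config_B_up G hl' z hzinj hzadj u w1 w2 huz_ne hu0z
      hw1_ne hw1a hw2_ne hw2a h12 hn12 huw1 huw2
  have claimBlow2 : ({w : V | w ∈ TS G x {i - 1} ∧ ¬ G.Adj u w}).ncard ≤ 2 := by
    by_contra hcon
    obtain ⟨w1, w2, w3, hm1, hm2, hm3, h12, h13, h23⟩ :=
      ex3 _ (by omega : 3 ≤ ({w : V | w ∈ TS G x {i - 1} ∧ ¬ G.Adj u w}).ncard)
    obtain ⟨⟨hw1r, hw1s⟩, hnuw1⟩ := hm1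
    obtain ⟨⟨hw2r, hw2s⟩, hnuw2⟩ := hm2
    obtain ⟨⟨hw3r, hw3s⟩, hnuw3⟩ := hm3
    have hw1a : ∀ k, G.Adj w1 (z k) ↔ k = 1 := fun k =>
      ((hw1s (i - k)).trans Set.mem_singleton_iff).trans (hzanch 1 k)
    have hw2a : ∀ k, G.Adj w2 (z k) ↔ k = 1 := fun k =>
      ((hw2s (i - k)).trans Set.mem_singleton_iff).trans (hzanch 1 k)
    have hw3a : ∀ k, G.Adj w3 (z k) ↔ k = 1 := fun k =>
      ((hw3s (i - k)).trans Set.mem_singleton_iff).trans (hzanch 1 k)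
    have hw1_ne : ∀ k, w1 ≠ z k := fun k h => hw1r ⟨i - k, h.symm⟩
    have hw2_ne : ∀ k, w2 ≠ z k := fun k h => hw2r ⟨i - k, h.symm⟩
    have hw3_ne : ∀ k, w3 ≠ z k := fun k h => hw3r ⟨i - k, h.symm⟩
    have hn12 : ¬ G.Adj w1 w2 := fun h =>
      htri (z 1) w1 w2 ((hw1a 1).mpr rfl).symm ((hw2a 1).mpr rfl).symm h
    have hn13 : ¬ G.Adj w1 w3 := fun h =>
      htri (z 1) w1 w3 ((hw1a 1).mpr rfl).symm ((hw3a 1).mpr rfl).symm h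
    have hn23 : ¬ G.Adj w2 w3 := fun h =>
      htri (z 1) w2 w3 ((hw2a 1).mpr rfl).symm ((hw3a 1).mpr rfl).symm h
    exact config_B_low G hl' z hzinj hzadj u w1 w2 w3 huz_ne hu0z
      hw1_ne hw1a hw2_ne hw2a hw3_ne hw3a h12 hn12 h13 hn13 h23 hn23 hnuw1 hnuw2 hnuw3
  refine ⟨⟨?_, claimAup⟩, ?_⟩
  · have h1 := hsplit (i + 2)
    omega
  · intro j hj
    rcases hj with rfl | rfl
    · refine ⟨?_, claimBup2⟩
      have h1 := hsplit (i - 1)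
      omega
    · refine ⟨?_, claimBup1⟩
      have h1 := hsplit (i + 1)
      omega
end

section
/- In the girth-4 setting, assume additionally that T₂ ≠ ∅. If for some i ∈ {1,2,3,4} there exist adjacent vertices u ∈ T_{x_i} and v ∈ T_{x_{i+1}} (indices modulo 4), then |T₂| = 1. -/
/-!
Since `G` is triangle-free, a vertex of `T₂` sees an opposite pair of the 4-cycle. Rotate the
cycle so that `u ∈ T_{x₀}` and `v ∈ T_{x₁}`. A vertex `w ∈ T_{{x₀,x₂}}` must then be adjacent to
`v`: otherwise `x₀, …, x₃, u, v, w` induce a subgraph carrying a plane on which the adjacency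
form exceeds the identity, and the Courant–Fischer principle gives two eigenvalues above `1`.
Symmetrically every `w ∈ T_{{x₁,x₃}}` is adjacent to `u`. Two distinct vertices of `T₂` now
produce a `K₃,₃` minor: a `K₃,₃` subgraph if they see the same opposite pair, and otherwise, for
`w₁ ∈ T_{{x₀,x₂}}` and `w₂ ∈ T_{{x₁,x₃}}`, the branch sets `{x₀}, {x₂, x₃, w₂}, {v}` against
`{x₁}, {u}, {w₁}`.
-/

open Function Matrix

namespace Matrix.IsHermitian

variable {n : Type*} [Fintype n] [DecidableEq n] {A : Matrix n n ℝ} (hA : A.IsHermitian)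

theorem dotProduct_self_eq_sum_sq (w : n → ℝ) :
    w ⬝ᵥ w = ∑ j, (star (hA.eigenvectorUnitary : Matrix n n ℝ) *ᵥ w) j ^ 2 := by
  set U : Matrix n n ℝ := ↑hA.eigenvectorUnitary
  have hU : U * star U = 1 := mem_unitaryGroup_iff.mp hA.eigenvectorUnitary.2
  have hUt : (star U)ᵀ = U := by
    rw [star_eq_conjTranspose, conjTranspose_eq_transpose_of_trivial, transpose_transpose]
  simp_rw [sq]
  change _ = (star U *ᵥ w) ⬝ᵥ (star U *ᵥ w)
  rw [dotProduct_mulVec, ← mulVec_transpose, hUt, mulVec_mulVec, hU, one_mulVec]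

theorem dotProduct_mulVec_eq_sum_eigenvalues (w : n → ℝ) :
    w ⬝ᵥ A *ᵥ w =
      ∑ j, hA.eigenvalues j * (star (hA.eigenvectorUnitary : Matrix n n ℝ) *ᵥ w) j ^ 2 := by
  set U : Matrix n n ℝ := ↑hA.eigenvectorUnitary
  have hUt : Uᵀ = star U := by
    rw [star_eq_conjTranspose, conjTranspose_eq_transpose_of_trivial]
  have hspec : A = U * diagonal hA.eigenvalues * star U := by simpa using hA.spectral_theorem
  conv_lhs =>
    rw [hspec, ← mulVec_mulVec, ← mulVec_mulVec, dotProduct_mulVec, ← mulVec_transpose, hUt]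
  simp only [mulVec_diagonal, dotProduct]
  exact Finset.sum_congr rfl fun j _ => by ring

end Matrix.IsHermitian

theorem exists_ne_zero_mul_add_mul_eq_zero (p q : ℝ) :
    ∃ a b : ℝ, (a ≠ 0 ∨ b ≠ 0) ∧ a * p + b * q = 0 := by
  by_cases hp : p = 0
  · exact ⟨1, 0, Or.inl one_ne_zero, by simp [hp]⟩
  · exact ⟨q, -p, Or.inr (neg_ne_zero.mpr hp), by ring⟩

theorem Matrix.injective_vec3 {α : Type*} {a b c : α} (hab : a ≠ b) (hac : a ≠ c)
    (hbc : b ≠ c) : Injective ![a, b, c] := by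
  intro i j h
  fin_cases i <;> fin_cases j <;> simp_all [eq_comm]

section ExtendByZero

variable {ι V α : Type*} [Fintype ι] [Fintype V] [CommSemiring α] {f : ι → V}

theorem Function.Injective.sum_extend_zero_mul (hf : Injective f) (c : ι → α) (h : V → α) :
    ∑ a, extend f c 0 a * h a = ∑ i, c i * h (f i) :=
  (Fintype.sum_of_injective f hf _ _
    (fun a ha => by simp [extend_apply' _ _ _ fun ⟨i, hi⟩ => ha ⟨i, hi⟩])
    fun i => by simp [hf.extend_apply]).symm

theorem Function.Injective.dotProduct_extend_zero (hf : Injective f) (c d : ι → α) :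
    extend f c 0 ⬝ᵥ extend f d 0 = c ⬝ᵥ d := by
  simp [dotProduct, hf.sum_extend_zero_mul, hf.extend_apply]

theorem Function.Injective.dotProduct_mulVec_extend_zero (hf : Injective f)
    (A : Matrix V V α) (c : ι → α) :
    extend f c 0 ⬝ᵥ A *ᵥ extend f c 0 = c ⬝ᵥ A.submatrix f f *ᵥ c := by
  simp only [dotProduct, mulVec, hf.sum_extend_zero_mul, submatrix_apply, mul_comm (A _ _)]

end ExtendByZero

namespace SimpleGraph

variable {V : Type*}

open scoped Classical in
theorem exists_quadForm_le_of_eigCount_le_one [Fintype V] [DecidableEq V] (G : SimpleGraph V)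
    (hl : eigCount G (fun t => 1 < t) ≤ 1) (v₁ v₂ : V → ℝ) :
    ∃ a b : ℝ, (a ≠ 0 ∨ b ≠ 0) ∧
      (a • v₁ + b • v₂) ⬝ᵥ G.adjMatrix ℝ *ᵥ (a • v₁ + b • v₂) ≤
        (a • v₁ + b • v₂) ⬝ᵥ (a • v₁ + b • v₂) := by
  set hA := adjMatrix_isHermitian G
  set coord : (V → ℝ) → V → ℝ := (star (hA.eigenvectorUnitary : Matrix V V ℝ) *ᵥ ·)
  set F := Finset.univ.filter fun j => 1 < hA.eigenvalues j
  have hF : F.card ≤ 1 := hl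
  -- `F` has at most one element, so one linear condition kills the coordinates indexed by `F`.
  obtain ⟨a, b, hab, hkill⟩ :=
    exists_ne_zero_mul_add_mul_eq_zero (∑ j ∈ F, coord v₁ j) (∑ j ∈ F, coord v₂ j)
  refine ⟨a, b, hab, ?_⟩
  have hzero : ∀ j ∈ F, coord (a • v₁ + b • v₂) j = 0 := by
    intro j hj
    have hsingle (g : V → ℝ) : ∑ k ∈ F, g k = g j :=
      Finset.sum_eq_single_of_mem j hj fun k hk hkj =>
        absurd (Finset.card_le_one.mp hF k hk j hj) hkj
    rw [hsingle, hsingle] at hkill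
    simpa [coord, mulVec_add, mulVec_smul] using hkill
  rw [hA.dotProduct_mulVec_eq_sum_eigenvalues, hA.dotProduct_self_eq_sum_sq]
  refine Finset.sum_le_sum fun j _ => ?_
  by_cases hj : j ∈ F
  · have h0 : coord (a • v₁ + b • v₂) j = 0 := hzero j hj
    simp only [coord] at h0
    simp [h0]
  · exact mul_le_of_le_one_left (sq_nonneg _) (by simpa [F] using hj)

open scoped Classical in
theorem exists_quadForm_comap_le_of_eigCount_le_one {ι : Type*} [Fintype V] [DecidableEq V]
    [Fintype ι] (G : SimpleGraph V) (hl : eigCount G (fun t => 1 < t) ≤ 1) {f : ι → V}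
    (hf : Injective f) (c₁ c₂ : ι → ℝ) :
    ∃ a b : ℝ, (a ≠ 0 ∨ b ≠ 0) ∧
      (a • c₁ + b • c₂) ⬝ᵥ (G.comap f).adjMatrix ℝ *ᵥ (a • c₁ + b • c₂) ≤
        (a • c₁ + b • c₂) ⬝ᵥ (a • c₁ + b • c₂) := by
  obtain ⟨a, b, hab, h⟩ :=
    G.exists_quadForm_le_of_eigCount_le_one hl (extend f c₁ 0) (extend f c₂ 0)
  have hlin : a • extend f c₁ 0 + b • extend f c₂ 0 = extend f (a • c₁ + b • c₂) 0 := by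
    rw [← extend_smul, ← extend_smul, ← extend_add, smul_zero, smul_zero, add_zero]
  have hsub : (G.adjMatrix ℝ).submatrix f f = (G.comap f).adjMatrix ℝ :=
    (Embedding.comap ⟨f, hf⟩ G).submatrix_adjMatrix ℝ
  refine ⟨a, b, hab, ?_⟩
  rwa [hlin, hf.dotProduct_mulVec_extend_zero, hf.dotProduct_extend_zero, hsub] at h

variable {G : SimpleGraph V}

theorem CliqueFree.not_adj_of_adj_of_adj (htf : G.CliqueFree 3) {u a b : V} (ha : G.Adj u a)
    (hb : G.Adj u b) : ¬G.Adj a b :=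
  fun hab => by classical exact htf {u, a, b} (is3Clique_triple_iff.mpr ⟨ha, hb, hab⟩)

theorem induce_singleton_connected (v : V) : (G.induce {v}).Connected := by
  rw [induce_singleton_eq_top]
  exact connected_top

theorem induce_triple_connected {a b c : V} (hab : G.Adj a b) (hbc : G.Adj b c) :
    (G.induce {a, b, c}).Connected := by
  have hsupp : {v | v ∈ (Walk.cons hab (Walk.cons hbc Walk.nil)).support} = {a, b, c} := by
    ext; simp
  exact hsupp ▸ Walk.connected_induce_support _

def cycleGraphAddRight (n : ℕ) (i : Fin (n + 2)) : cycleGraph (n + 2) ≃g cycleGraph (n + 2) where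
  toEquiv := Equiv.addRight i
  map_rel_iff' := by simp [cycleGraph_adj]

def cycleGraphSubLeft (n : ℕ) (i : Fin (n + 2)) : cycleGraph (n + 2) ≃g cycleGraph (n + 2) where
  toEquiv := Equiv.subLeft i
  map_rel_iff' := by simp [cycleGraph_adj, or_comm]

def Embedding.cycleGraphFourOfCliqueFree (htf : G.CliqueFree 3) (x : Fin 4 → V)
    (hinj : Injective x) (hcyc : ∀ i, G.Adj (x i) (x (i + 1))) : cycleGraph 4 ↪g G where
  toFun := x
  inj' := hinj
  map_rel_iff' {i j} := by
    obtain ⟨d, rfl⟩ : ∃ d, j = i + d := ⟨j - i, by abel⟩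
    have hcycleGraph : ∀ i d : Fin 4, (cycleGraph 4).Adj i (i + d) ↔ d = 1 ∨ d = 3 := by decide
    have hd : d = 0 ∨ d = 1 ∨ d = 2 ∨ d = 3 := by revert d; decide
    simp only [Embedding.coeFn_mk, hcycleGraph]
    rcases hd with rfl | rfl | rfl | rfl
    · simp
    · simpa using hcyc i
    · simp only [Fin.reduceEq, or_self, iff_false]
      have h := htf.not_adj_of_adj_of_adj (hcyc i).symm (hcyc (i + 1))
      rwa [add_assoc, show (1 + 1 : Fin 4) = 2 from rfl] at h
    · simp only [or_true, iff_true]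
      have h := (hcyc (i + 3)).symm
      rwa [add_assoc, show (3 + 1 : Fin 4) = 0 from rfl, add_zero] at h

end SimpleGraph

section Minors

open SimpleGraph

variable {V W ι : Type*} {G : SimpleGraph V} {H : SimpleGraph W}

theorem hasMinor_of_injective {f : ι → V} (hf : Injective f) (B : W → Set ι)
    (hne : ∀ w, (B w).Nonempty) (hdisj : Pairwise (Disjoint on B))
    (hconn : ∀ w, (G.induce (f '' B w)).Connected)
    (hadj : ∀ ⦃w₁ w₂⦄, H.Adj w₁ w₂ → ∃ a ∈ B w₁, ∃ b ∈ B w₂, G.Adj (f a) (f b)) :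
    HasMinor G H := by
  refine ⟨fun w => f '' B w, fun w => (hne w).image f,
    fun w₁ w₂ h => (Set.disjoint_image_iff hf).mpr (hdisj h), hconn, fun w₁ w₂ h => ?_⟩
  obtain ⟨a, ha, b, hb, hab⟩ := hadj h
  exact ⟨f a, Set.mem_image_of_mem f ha, f b, Set.mem_image_of_mem f hb, hab⟩

theorem hasMinor_of_copy (f : Copy H G) : HasMinor G H :=
  hasMinor_of_injective f.injective (fun w => {w}) (fun w => Set.singleton_nonempty w)
    (fun w₁ w₂ h => Set.disjoint_singleton.mpr h)
    (fun w => by rw [Set.image_singleton]; exact induce_singleton_connected _)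
    fun w₁ w₂ h => ⟨w₁, rfl, w₂, rfl, f.toHom.map_adj h⟩

theorem hasMinor_completeBipartiteGraph {α β : Type*} {a : α → V} {b : β → V}
    (ha : Injective a) (hb : Injective b) (hab : ∀ i j, G.Adj (a i) (b j)) :
    HasMinor G (completeBipartiteGraph α β) := by
  refine hasMinor_of_copy ⟨⟨Sum.elim a b, ?_⟩, ha.sumElim hb fun i j => G.ne_of_adj (hab i j)⟩
  rintro (i | i) (j | j) h <;> simp at h
  · exact hab i j
  · exact (hab j i).symm

end Minors

section OutsideVertices

variable {V : Type*} {G : SimpleGraph V} {x : Fin 4 → V}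

theorem eq_of_mem_TS_of_mem_TS {v : V} {S S' : Set (Fin 4)} (h : v ∈ TS G x S)
    (h' : v ∈ TS G x S') : S = S' :=
  Set.ext fun i => (h.2 i).symm.trans (h'.2 i)

theorem adj_iff_of_mem_TS {v : V} {S : Set (Fin 4)} (hv : v ∈ TS G x S) (i : Fin 4) :
    G.Adj (x i) v ↔ i ∈ S :=
  G.adj_comm _ _ |>.trans (hv.2 i)

theorem not_adj_of_mem_TS_of_mem_TS (htf : G.CliqueFree 3) {v w : V} {S S' : Set (Fin 4)}
    (hv : v ∈ TS G x S) (hw : w ∈ TS G x S') {i : Fin 4} (hiS : i ∈ S) (hiS' : i ∈ S') :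
    ¬G.Adj v w :=
  htf.not_adj_of_adj_of_adj ((adj_iff_of_mem_TS hv i).mpr hiS) ((adj_iff_of_mem_TS hw i).mpr hiS')

theorem TS_comp_equiv (σ : Equiv.Perm (Fin 4)) (S : Set (Fin 4)) :
    TS G (x ∘ σ) S = TS G x (σ '' S) := by
  ext v
  refine and_congr (by rw [σ.surjective.range_comp]) (σ.forall_congr fun {i} => ?_)
  rw [σ.injective.mem_set_image]
  rfl

theorem Tdeg_comp_equiv (σ : Equiv.Perm (Fin 4)) (j : ℕ) : Tdeg G (x ∘ σ) j = Tdeg G x j := by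
  ext v
  refine and_congr (by rw [σ.surjective.range_comp]) ?_
  rw [show {i | G.Adj v ((x ∘ σ) i)} = σ ⁻¹' {i | G.Adj v (x i)} from rfl,
    Set.ncard_preimage_of_injective_subset_range σ.injective (by simp)]

theorem injective_sumElim_of_mem_TS {ι : Type*} (hx : Injective x) {y : ι → V}
    {S : ι → Finset (Fin 4)} (hS : Injective S) (hy : ∀ k, y k ∈ TS G x (S k)) :
    Injective (Sum.elim x y) :=
  hx.sumElim
    (fun k l h => hS (Finset.coe_injective (eq_of_mem_TS_of_mem_TS (hy k) (h ▸ hy l))))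
    fun i k h => (hy k).1 ⟨i, h⟩

end OutsideVertices

section FourCycle

open SimpleGraph

variable {V : Type*} {G : SimpleGraph V} (C : cycleGraph 4 ↪g G)

theorem mem_TS_of_mem_Tdeg_two (htf : G.CliqueFree 3) {w : V} (hw : w ∈ Tdeg G C 2) :
    w ∈ TS G C {0, 2} ∨ w ∈ TS G C {1, 3} := by
  obtain ⟨hwC, hcard⟩ := hw
  obtain ⟨a, b, hab, hN⟩ := Set.ncard_eq_two.mp hcard
  have hadj (k : Fin 4) : G.Adj w (C k) ↔ k = a ∨ k = b := by
    simpa using Set.ext_iff.mp hN k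
  have hnab : ¬(cycleGraph 4).Adj a b := fun h =>
    htf.not_adj_of_adj_of_adj ((hadj a).mpr (.inl rfl)) ((hadj b).mpr (.inr rfl))
      (C.map_adj_iff.mpr h)
  have key : ∀ a b : Fin 4, a ≠ b → ¬(cycleGraph 4).Adj a b →
      (∀ k, k = a ∨ k = b ↔ k = 0 ∨ k = 2) ∨ (∀ k, k = a ∨ k = b ↔ k = 1 ∨ k = 3) := by
    decide
  rcases key a b hab hnab with h | h
  · exact .inl ⟨hwC, fun k => by simpa [h] using hadj k⟩
  · exact .inr ⟨hwC, fun k => by simpa [h] using hadj k⟩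

theorem adj_of_mem_TS_zero_two [Fintype V] [DecidableEq V]
    (hl : eigCount G (fun t => 1 < t) ≤ 1) {u v w : V} (hu : u ∈ TS G C {0})
    (hv : v ∈ TS G C {1}) (hw : w ∈ TS G C {0, 2}) (huv : G.Adj u v) (huw : ¬G.Adj u w) :
    G.Adj v w := by
  by_contra hvw
  have hf : Injective (Sum.elim C ![u, v, w]) :=
    injective_sumElim_of_mem_TS C.injective (S := ![{0}, {1}, {0, 2}]) (by decide)
      fun k => by fin_cases k <;> simpa
  -- On the span of these two vectors the quadratic form of `A - 1` of the induced subgraph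
  -- is `2a² + 4ab + 3b²`, which is positive definite.
  obtain ⟨a, b, hab, h⟩ := G.exists_quadForm_comap_le_of_eigCount_le_one hl hf
    (Sum.elim ![1, 2, 0, 0] ![0, 3, 0]) (Sum.elim ![0, 0, 3, 2] ![-2, 0, 2])
  have hwu : ¬G.Adj w u := fun h => huw h.symm
  have hwv : ¬G.Adj w v := fun h => hvw h.symm
  simp +decide [dotProduct, mulVec, adjMatrix_apply, Fintype.sum_sum_type, Fin.sum_univ_four,
    Fin.sum_univ_three, cycleGraph_adj, hu.2, hv.2, hw.2, adj_iff_of_mem_TS hu,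
    adj_iff_of_mem_TS hv, adj_iff_of_mem_TS hw, huv, huv.symm, huw, hvw, hwu, hwv] at h
  rcases hab with ha | hb
  · nlinarith [sq_nonneg (2 * a + 3 * b), sq_pos_of_ne_zero ha]
  · nlinarith [sq_nonneg (a + b), sq_pos_of_ne_zero hb]

theorem hasMinor_K33_of_mem_TS_zero_two {v w₁ w₂ : V} (hv : v ∈ TS G C {1})
    (hw₁ : w₁ ∈ TS G C {0, 2}) (hw₂ : w₂ ∈ TS G C {0, 2}) (hvw₁ : G.Adj v w₁)
    (hvw₂ : G.Adj v w₂) (hne : w₁ ≠ w₂) :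
    HasMinor G (completeBipartiteGraph (Fin 3) (Fin 3)) := by
  refine hasMinor_completeBipartiteGraph (a := ![C 0, C 2, v]) (b := ![C 1, w₁, w₂]) ?_ ?_ ?_
  · exact injective_vec3 (C.injective.ne (by decide)) (fun h => hv.1 ⟨0, h⟩)
      fun h => hv.1 ⟨2, h⟩
  · exact injective_vec3 (fun h => hw₁.1 ⟨1, h⟩) (fun h => hw₂.1 ⟨1, h⟩) hne
  · intro i j
    fin_cases i <;> fin_cases j <;>
      simp +decide [adj_iff_of_mem_TS hw₁, adj_iff_of_mem_TS hw₂, hv.2, hvw₁, hvw₂]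

theorem hasMinor_K33_of_mem_TS_zero_two_of_mem_TS_one_three {u v w₁ w₂ : V}
    (hu : u ∈ TS G C {0}) (hv : v ∈ TS G C {1}) (huv : G.Adj u v) (hw₁ : w₁ ∈ TS G C {0, 2})
    (hw₂ : w₂ ∈ TS G C {1, 3}) (hvw₁ : G.Adj v w₁) (huw₂ : G.Adj u w₂) :
    HasMinor G (completeBipartiteGraph (Fin 3) (Fin 3)) := by
  set f := Sum.elim C ![u, v, w₁, w₂]
  have hf : Injective f :=
    injective_sumElim_of_mem_TS C.injective (S := ![{0}, {1}, {0, 2}, {1, 3}]) (by decide)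
      fun k => by fin_cases k <;> simpa
  let B : Fin 3 ⊕ Fin 3 → Finset (Fin 4 ⊕ Fin 4) :=
    Sum.elim ![{.inl 0}, {.inl 2, .inl 3, .inr 3}, {.inr 1}] ![{.inl 1}, {.inr 0}, {.inr 2}]
  have hB : ∀ k, f '' B k = Sum.elim ![{C 0}, {C 2, C 3, w₂}, {v}] ![{C 1}, {u}, {w₁}] k := by
    rintro (k | k) <;> fin_cases k <;> simp [B, f, Set.image_insert_eq]
  have hdisj : ∀ k l, k ≠ l → Disjoint (B k) (B l) := by decide
  have h23 : G.Adj (C 2) (C 3) := C.map_adj_iff.mpr (by decide)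
  have h3w₂ : G.Adj (C 3) w₂ := (adj_iff_of_mem_TS hw₂ 3).mpr (by simp)
  refine hasMinor_of_injective hf (fun k => B k) (fun k => ?_)
    (fun k l h => Finset.disjoint_coe.mpr (hdisj k l h)) (fun k => ?_) fun k l h => ?_
  · rcases k with k | k <;> fin_cases k <;> simp [B]
  · rw [hB]
    rcases k with k | k <;> fin_cases k <;>
      first
        | exact induce_singleton_connected _
        | exact induce_triple_connected h23 h3w₂
  · rcases k with k | k <;> rcases l with l | l <;> simp at h <;> fin_cases k <;> fin_cases l <;>
      simp +decide [B, f, adj_iff_of_mem_TS hu, adj_iff_of_mem_TS hv, adj_iff_of_mem_TS hw₁,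
        adj_iff_of_mem_TS hw₂, hu.2, hv.2, hw₁.2, hw₂.2, huv, hvw₁, huw₂, huv.symm, hvw₁.symm,
        huw₂.symm]

theorem Tdeg_two_subsingleton [Fintype V] [DecidableEq V] (htf : G.CliqueFree 3)
    (hl : eigCount G (fun t => 1 < t) ≤ 1)
    (hK33 : ¬HasMinor G (completeBipartiteGraph (Fin 3) (Fin 3))) {u v : V}
    (hu : u ∈ TS G C {0}) (hv : v ∈ TS G C {1}) (huv : G.Adj u v) :
    (Tdeg G C 2).Subsingleton := by
  -- the reflection `k ↦ 1 - k` swaps `u` with `v` and `T_{x₀,x₂}` with `T_{x₁,x₃}`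
  let C' := C.comp (cycleGraphSubLeft 2 1).toEmbedding
  have hC' (S : Set (Fin 4)) : TS G C' S = TS G C (Equiv.subLeft 1 '' S) := TS_comp_equiv _ S
  have hu' : u ∈ TS G C' {1} := by rw [hC']; simpa using hu
  have hv' : v ∈ TS G C' {0} := by rw [hC']; simpa using hv
  have hC'02 : TS G C' {0, 2} = TS G C {1, 3} := by
    rw [hC', Set.image_insert_eq, Set.image_singleton]; rfl
  have hA (w : V) (hw : w ∈ TS G C {0, 2}) : G.Adj v w :=
    adj_of_mem_TS_zero_two C hl hu hv hw huv
      (not_adj_of_mem_TS_of_mem_TS htf hu hw (i := 0) rfl (by simp))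
  have hB (w : V) (hw : w ∈ TS G C {1, 3}) : G.Adj u w :=
    adj_of_mem_TS_zero_two C' hl hv' hu' (hC'02 ▸ hw) huv.symm
      (not_adj_of_mem_TS_of_mem_TS htf hv hw (i := 1) rfl (by simp))
  intro w₁ h₁ w₂ h₂
  by_contra hne
  apply hK33
  rcases mem_TS_of_mem_Tdeg_two C htf h₁ with a₁ | b₁ <;>
    rcases mem_TS_of_mem_Tdeg_two C htf h₂ with a₂ | b₂
  · exact hasMinor_K33_of_mem_TS_zero_two C hv a₁ a₂ (hA _ a₁) (hA _ a₂) hne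
  · exact hasMinor_K33_of_mem_TS_zero_two_of_mem_TS_one_three C hu hv huv a₁ b₂ (hA _ a₁)
      (hB _ b₂)
  · exact hasMinor_K33_of_mem_TS_zero_two_of_mem_TS_one_three C hu hv huv a₂ b₁ (hA _ a₂)
      (hB _ b₁)
  · exact hasMinor_K33_of_mem_TS_zero_two C' hu' (hC'02 ▸ b₁) (hC'02 ▸ b₂) (hB _ b₁)
      (hB _ b₂) hne

end FourCycle

theorem girth_four_consecutive_edge_T2_card_one_general {V : Type*} [Fintype V] [DecidableEq V] (G : SimpleGraph V)
    (htf : G.CliqueFree 3)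
    (hl : eigCount G (fun t => 1 < t) ≤ 1) (hplanar : WagnerPlanar G)
    (x : Fin 4 → V) (hinj : Function.Injective x)
    (hcyc : ∀ i, G.Adj (x i) (x (i + 1)))
    (hT2 : (Tdeg G x 2).Nonempty) :
    ∀ i : Fin 4, (∃ u ∈ TS G x {i}, ∃ v ∈ TS G x {i + 1}, G.Adj u v) →
      (Tdeg G x 2).ncard = 1 := by
  rintro i ⟨u, hu, v, hv, huv⟩
  let C := (SimpleGraph.Embedding.cycleGraphFourOfCliqueFree htf x hinj hcyc).comp
    (SimpleGraph.cycleGraphAddRight 2 i).toEmbedding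
  have hC (S : Set (Fin 4)) : TS G C S = TS G x (Equiv.addRight i '' S) := TS_comp_equiv _ S
  have hu' : u ∈ TS G C {0} := by rw [hC]; simpa using hu
  have hv' : v ∈ TS G C {1} := by rw [hC]; simpa [add_comm] using hv
  have hT2C : Tdeg G C 2 = Tdeg G x 2 := Tdeg_comp_equiv _ 2
  obtain ⟨w, hw⟩ := hT2
  rw [Set.ncard_eq_one]
  exact ⟨w, (hT2C ▸ Tdeg_two_subsingleton C htf hl hplanar.2 hu' hv' huv).eq_singleton_of_mem hw⟩

/-- in the girth-4 setting, if moreover `T₂ ≠ ∅` and for some `i` there are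
adjacent vertices `u ∈ T_{x_i}` and `v ∈ T_{x_{i+1}}`, then `|T₂| = 1`. -/
theorem girth_four_consecutive_edge_T2_card_one {V : Type*} [Fintype V] [DecidableEq V] (G : SimpleGraph V)
    (hconn : G.Connected) (htf : G.CliqueFree 3)
    (hl : eigCount G (fun t => 1 < t) ≤ 1) (hplanar : WagnerPlanar G)
    (hgirth : G.egirth = 4) (x : Fin 4 → V) (hinj : Function.Injective x)
    (hcyc : ∀ i, G.Adj (x i) (x (i + 1)))
    (hT2 : (Tdeg G x 2).Nonempty) :
    ∀ i : Fin 4, (∃ u ∈ TS G x {i}, ∃ v ∈ TS G x {i + 1}, G.Adj u v) →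
      (Tdeg G x 2).ncard = 1 :=
  girth_four_consecutive_edge_T2_card_one_general G htf hl hplanar x hinj hcyc hT2
end
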